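/- (Gap underlying the inapproximability claim of Theorem 2.) If the 3SAT instance φ is unsatisfiable, then for every assignment α : {1,…,n} → {true,false} there exists a clause index j ∈ {1,…,m} such that every directed s-t path in G_φ that follows α has total cost at least 1 under c^j; whereas if φ is satisfiable there is an assignment α such that for every j ∈ {1,…,m} some directed s-t path following α has total cost 0 under c^j. -/

import Mathlib

/-- Vertices of the graph `G_φ`: source `s`, sink `t`, and for each variable index
`i ∈ {1,…,n}` the four vertices `tᵢ¹, tᵢ², fᵢ¹, fᵢ²`.  Here `Vtx.mid i second isTrue`
is `tᵢ` if `isTrue = true`, `fᵢ` if `isTrue = false`; superscript `2` iff `second = true`. -/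
inductive Vtx (n : ℕ) : Type where
  | s : Vtx n
  | t : Vtx n
  | mid (i : Fin n) (second : Bool) (isTrue : Bool) : Vtx n
deriving DecidableEq

/-- The directed edges of `G_φ`. -/
def GEdge (n : ℕ) : Vtx n → Vtx n → Prop :=
  fun a b =>
    match a, b with
    | .s, .mid i false _ => (i : ℕ) = 0
    | .mid i false _, .mid j false _ => (j : ℕ) = (i : ℕ) + 1
    | .mid i true _, .mid j true _ => (j : ℕ) = (i : ℕ) + 1
    | .mid i false v, .mid j true w => j = i ∧ w = v
    | .mid i true _, .t => (i : ℕ) = n - 1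
    | _, _ => False

/-- The edge costs `c^j` determined by a clause `C` (a set of literals `(i, ε)`):
a bridge edge `(tᵢ¹,tᵢ²)` (resp. `(fᵢ¹,fᵢ²)`) costs `0` if `(i,true) ∈ C`
(resp. `(i,false) ∈ C`) and `1` otherwise; all non-bridge edges cost `0`. -/
def cost (n : ℕ) (C : Finset (Fin n × Bool)) : Vtx n → Vtx n → ℕ
  | .mid i false v, .mid j true w =>
      if j = i ∧ w = v then (if (i, v) ∈ C then 0 else 1) else 0
  | _, _ => 0

/-- The cost of a path (list of vertices) under the scenario of clause `C`:
the sum of the edge costs over consecutive pairs. -/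
def pathCost (n : ℕ) (C : Finset (Fin n × Bool)) (P : List (Vtx n)) : ℕ :=
  ((P.zip P.tail).map fun q => cost n C q.1 q.2).sum

/-- A directed `s`-`t` path in `G_φ`: consecutive pairs are edges, vertices are
pairwise distinct, the first vertex is `s` and the last is `t`. -/
def isSTPath (n : ℕ) (P : List (Vtx n)) : Prop :=
  P.Chain' (GEdge n) ∧ P.Nodup ∧ P.head? = some Vtx.s ∧ P.getLast? = some Vtx.t

/-- A path follows the assignment `α` if for every index `i`, each of its vertices with
index `i` is a `t`-vertex when `α i = true` and an `f`-vertex when `α i = false`. -/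
def follows (n : ℕ) (α : Fin n → Bool) (P : List (Vtx n)) : Prop :=
  ∀ (i : Fin n) (second v : Bool), Vtx.mid i second v ∈ P → v = α i

/-- The assignment `α` satisfies the clause `C` if it makes some literal of `C` true. -/
def satisfiesClause (n : ℕ) (α : Fin n → Bool) (C : Finset (Fin n × Bool)) : Prop :=
  ∃ l ∈ C, α l.1 = l.2

/-!
Every `s`-`t` path has to move from the first layer to the second, and the only edges doing so
are the bridges; a path following `α` therefore takes a bridge `(i, α i)`, which costs `1` under
`c^j` unless the literal `(i, α i)` lies in `C_j`. So if `α` falsifies `C_j`, every such path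
costs at least `1`; if `α` satisfies `C_j` through the literal `(i, α i)`, the path following
`α` that takes the bridge at `i` costs `0`.
-/

theorem List.IsChain.rel_of_mem_zip_tail {α : Type*} {R : α → α → Prop} {l : List α}
    (hl : l.IsChain R) {x y : α} (hxy : (x, y) ∈ l.zip l.tail) : R x y := by
  induction l with
  | nil => simp at hxy
  | cons a l ih =>
    cases l with
    | nil => simp at hxy
    | cons b l =>
      rcases List.isChain_cons_cons.mp hl with ⟨hab, hl⟩
      rcases List.mem_cons.mp hxy with hxy | hxy
      · obtain ⟨rfl, rfl⟩ := Prod.mk.inj hxy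
        exact hab
      · exact ih hl hxy

theorem List.exists_mem_zip_tail_of_not_head_of_getLast {α : Type*} (p : α → Prop)
    {l : List α} {a b : α} (ha : l.head? = some a) (hb : l.getLast? = some b)
    (hpa : ¬ p a) (hpb : p b) : ∃ x y, (x, y) ∈ l.zip l.tail ∧ ¬ p x ∧ p y := by
  induction l generalizing a with
  | nil => simp at ha
  | cons c l ih =>
    obtain rfl : c = a := by simpa using ha
    cases l with
    | nil => simp_all
    | cons d l =>
      by_cases hpd : p d
      · exact ⟨c, d, by simp, hpa, hpd⟩
      · obtain ⟨x, y, hxy, hx, hy⟩ := ih rfl (by simpa [List.getLast?_cons_cons] using hb) hpd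
        exact ⟨x, y, List.mem_cons_of_mem _ hxy, hx, hy⟩

theorem List.zip_tail_map_range {α : Type*} (N : ℕ) (g : ℕ → α) :
    ((List.range (N + 1)).map g).zip ((List.range (N + 1)).map g).tail
      = (List.range N).map fun k => (g k, g (k + 1)) := by
  apply List.ext_getElem <;> simp

section

variable {n : ℕ}

def Vtx.pastBridge : Vtx n → Prop
  | .s => False
  | .t => True
  | .mid _ second _ => second = true

theorem GEdge.eq_bridge_of_not_pastBridge {x y : Vtx n} (h : GEdge n x y)
    (hx : ¬ x.pastBridge) (hy : y.pastBridge) :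
    ∃ i v, x = .mid i false v ∧ y = .mid i true v := by
  cases x <;> cases y <;> simp_all [GEdge, Vtx.pastBridge]

theorem isSTPath.exists_bridge_mem_zip_tail {P : List (Vtx n)} (hP : isSTPath n P) :
    ∃ i v, (Vtx.mid i false v, Vtx.mid i true v) ∈ P.zip P.tail := by
  obtain ⟨hchain, -, hs, ht⟩ := hP
  obtain ⟨x, y, hxy, hx, hy⟩ :=
    List.exists_mem_zip_tail_of_not_head_of_getLast Vtx.pastBridge hs ht id trivial
  obtain ⟨i, v, rfl, rfl⟩ := (hchain.rel_of_mem_zip_tail hxy).eq_bridge_of_not_pastBridge hx hy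
  exact ⟨i, v, hxy⟩

theorem cost_le_pathCost (C : Finset (Fin n × Bool)) {P : List (Vtx n)} {x y : Vtx n}
    (hxy : (x, y) ∈ P.zip P.tail) : cost n C x y ≤ pathCost n C P :=
  List.le_sum_of_mem (List.mem_map_of_mem hxy)

theorem cost_bridge (C : Finset (Fin n × Bool)) (i : Fin n) (v : Bool) :
    cost n C (.mid i false v) (.mid i true v) = if (i, v) ∈ C then 0 else 1 := by
  simp [cost]

theorem one_le_pathCost_of_not_satisfiesClause {α : Fin n → Bool} {C : Finset (Fin n × Bool)}
    {P : List (Vtx n)} (hP : isSTPath n P) (hfollow : follows n α P)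
    (hC : ¬ satisfiesClause n α C) : 1 ≤ pathCost n C P := by
  obtain ⟨i, v, hbridge⟩ := hP.exists_bridge_mem_zip_tail
  obtain rfl : v = α i := hfollow i false v (List.of_mem_zip hbridge).1
  have hnot : (i, α i) ∉ C := fun hmem => hC ⟨(i, α i), hmem, rfl⟩
  simpa [cost_bridge, hnot] using cost_le_pathCost C hbridge

/-- The `k`-th vertex of the path that follows `α` and takes the bridge at index `i`:
`s`, first-layer vertices `0, …, i`, second-layer vertices `i, …, n - 1`, `t`. -/
def switchVtx (α : Fin n → Bool) (i : Fin n) (k : ℕ) : Vtx n :=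
  if k = 0 then .s
  else if h : k ≤ (i : ℕ) + 1 then
    .mid ⟨k - 1, by omega⟩ false (α ⟨k - 1, by omega⟩)
  else if h : k ≤ n + 1 then
    .mid ⟨k - 2, by omega⟩ true (α ⟨k - 2, by omega⟩)
  else .t

def switchPath (α : Fin n → Bool) (i : Fin n) : List (Vtx n) :=
  (List.range (n + 3)).map (switchVtx α i)

theorem switchVtx_injOn (α : Fin n → Bool) (i : Fin n) :
    Set.InjOn (switchVtx α i) (Set.Iio (n + 3)) := by
  intro k hk l hl h
  simp only [Set.mem_Iio, switchVtx] at hk hl h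
  split_ifs at h <;> first
    | omega
    | (simp only [Vtx.mid.injEq, Fin.mk.injEq] at h; omega)
    | simp at h

theorem gEdge_switchVtx (α : Fin n → Bool) (i : Fin n) {k : ℕ} (hk : k < n + 2) :
    GEdge n (switchVtx α i k) (switchVtx α i (k + 1)) := by
  simp only [switchVtx]
  split_ifs <;> simp only [GEdge, Fin.ext_iff] <;> first | omega | exact ⟨by omega, by congr 2⟩

theorem isSTPath_switchPath (α : Fin n → Bool) (i : Fin n) : isSTPath n (switchPath α i) := by
  refine ⟨?_, ?_, ?_, ?_⟩
  · show List.IsChain _ _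
    rw [switchPath, List.isChain_map, List.isChain_range_succ]
    exact fun k hk => gEdge_switchVtx α i hk
  · refine List.Nodup.map_on (fun k hk l hl h => ?_) List.nodup_range
    exact switchVtx_injOn α i (List.mem_range.mp hk) (List.mem_range.mp hl) h
  · simp [switchPath, List.range_succ_eq_map, switchVtx]
  · simp [switchPath, List.range_succ, switchVtx]

theorem follows_switchPath (α : Fin n → Bool) (i : Fin n) : follows n α (switchPath α i) := by
  intro j second v hmem
  obtain ⟨k, -, hk⟩ := List.mem_map.mp hmem
  simp only [switchVtx] at hk
  split_ifs at hk <;> cases hk <;> rfl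

theorem pathCost_switchPath_eq_zero {α : Fin n → Bool} {i : Fin n} {C : Finset (Fin n × Bool)}
    (hi : (i, α i) ∈ C) : pathCost n C (switchPath α i) = 0 := by
  rw [pathCost, switchPath, List.zip_tail_map_range, List.map_map]
  refine List.sum_eq_zero fun c hc => ?_
  obtain ⟨k, hk, rfl⟩ := List.mem_map.mp hc
  rw [List.mem_range] at hk
  by_cases hbridge : k = (i : ℕ) + 1
  · subst hbridge
    have hlast : switchVtx α i ((i : ℕ) + 1) = .mid i false (α i) := by
      simp [switchVtx]
    have hnext : switchVtx α i ((i : ℕ) + 1 + 1) = .mid i true (α i) := by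
      simp [switchVtx]
    simp [hlast, hnext, cost_bridge, hi]
  · simp only [Function.comp_apply, switchVtx]
    split_ifs <;> first | omega | simp [cost]

end

theorem stmt9_general (n m : ℕ)
    (C : Fin m → Finset (Fin n × Bool)) :
    ((¬ ∃ α : Fin n → Bool, ∀ j : Fin m, satisfiesClause n α (C j)) →
      ∀ α : Fin n → Bool, ∃ j : Fin m,
        ∀ P : List (Vtx n), isSTPath n P → follows n α P → 1 ≤ pathCost n (C j) P) ∧
    ((∃ α : Fin n → Bool, ∀ j : Fin m, satisfiesClause n α (C j)) →
      ∃ α : Fin n → Bool, ∀ j : Fin m,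
        ∃ P : List (Vtx n), isSTPath n P ∧ follows n α P ∧ pathCost n (C j) P = 0) := by
  constructor
  · intro hunsat α
    obtain ⟨j, hj⟩ : ∃ j, ¬ satisfiesClause n α (C j) := by
      simpa using fun h => hunsat ⟨α, h⟩
    exact ⟨j, fun P hP hfollow => one_le_pathCost_of_not_satisfiesClause hP hfollow hj⟩
  · rintro ⟨α, hα⟩
    refine ⟨α, fun j => ?_⟩
    obtain ⟨⟨i, v⟩, hiv, hv⟩ := hα j
    obtain rfl : α i = v := hv
    exact ⟨switchPath α i, isSTPath_switchPath α i, follows_switchPath α i,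
      pathCost_switchPath_eq_zero hiv⟩

/-- The gap underlying the inapproximability claim: if `φ` is unsatisfiable, then for
every assignment `α` there is a clause index `j` such that every directed `s`-`t` path
in `G_φ` following `α` has cost at least `1` under `c^j`; whereas if `φ` is satisfiable
there is an assignment `α` such that for every `j` some directed `s`-`t` path following
`α` has total cost `0` under `c^j`. -/
theorem stmt9 (n m : ℕ) (hn : 1 ≤ n) (hm : 1 ≤ m)
    (C : Fin m → Finset (Fin n × Bool)) (hC : ∀ j, (C j).card ≤ 3) :
    ((¬ ∃ α : Fin n → Bool, ∀ j : Fin m, satisfiesClause n α (C j)) →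
      ∀ α : Fin n → Bool, ∃ j : Fin m,
        ∀ P : List (Vtx n), isSTPath n P → follows n α P → 1 ≤ pathCost n (C j) P) ∧
    ((∃ α : Fin n → Bool, ∀ j : Fin m, satisfiesClause n α (C j)) →
      ∃ α : Fin n → Bool, ∀ j : Fin m,
        ∃ P : List (Vtx n), isSTPath n P ∧ follows n α P ∧ pathCost n (C j) P = 0) :=
  stmt9_general n m C
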